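/- arXiv:1809.03083 — 3 statements merged into one kernel-verified Lean document; each statement's English description precedes it below -/
import Mathlib

section
/- Let $(Y_n)_{n\ge0}$ be a Markov chain on $\S=\{1,\dots,M\}$ with entrywise positive transition matrix $P$, let $b:\S\to\mathbb{R}$, let $\tau>0$, and let $\bar\lambda_1$ be the Perron eigenvalue of $(e^{\tau b(i)}P_{ij})$. Then there exist positive constants $\widetilde K_1,\widetilde K_2$ and $T>0$ such that for all $t\ge T$ and every initial state $i_0$, $\widetilde K_1\,\bar\lambda_1^{\,t/\tau}\le \mathbb{E}_{i_0}\big[\exp\big(\tau\sum_{k=0}^{\lfloor t/\tau\rfloor-1} b(Y_k)+ (t-\lfloor t/\tau\rfloor\tau)b(Y_{\lfloor t/\tau\rfloor})\big)\big]\le \widetilde K_2\,\bar\lambda_1^{\,t/\tau}$. -/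
/-!
The path sum is the `i₀`-th entry of `A ^ n *ᵥ v`, where `A = (exp (τ b i) * P i j)`,
`n = ⌊t / τ⌋` and `v j = exp ((t - n τ) b j)`; since `t - n τ ∈ [0, τ)`, the vector `v` stays
between two fixed positive vectors.

A positive matrix has a positive eigenvector `w`, with eigenvalue `r > 0`: maximise the
Collatz–Wielandt ratio `minᵢ (A x)ᵢ / xᵢ` over the image of the standard simplex under `A`; if the
maximiser `y` were not an eigenvector, `A y` would have a strictly larger ratio. Comparing any
complex eigenvector `v` with `w` at the index maximising `‖vᵢ‖ / wᵢ` shows that `r` bounds the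
modulus of every eigenvalue, so `r = λ̄₁`. Sandwiching `v` between multiples of `w` and using
monotonicity of `A ^ n` gives `A ^ n *ᵥ v ≍ r ^ n`, and `r ^ (t / τ) / r ^ n` lies between
`min 1 r` and `max 1 r`.
-/

open Matrix Finset

theorem exists_pos_smul_le_and_le_smul {ι : Type*} [Finite ι] [Nonempty ι] {u w : ι → ℝ}
    (hu : ∀ i, 0 < u i) (hw : ∀ i, 0 < w i) :
    ∃ c : ℝ, 0 < c ∧ ∃ C : ℝ, 0 < C ∧ c • w ≤ u ∧ u ≤ C • w := by
  obtain ⟨i, hi⟩ := Finite.exists_min fun j => u j / w j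
  obtain ⟨k, hk⟩ := Finite.exists_max fun j => u j / w j
  exact ⟨u i / w i, div_pos (hu i) (hw i), u k / w k, div_pos (hu k) (hw k),
    fun j => (le_div_iff₀ (hw j)).1 (hi j), fun j => (div_le_iff₀ (hw j)).1 (hk j)⟩

namespace Matrix

variable {ι : Type*} [Fintype ι]

theorem mem_spectrum_iff_exists_mulVec_eq_smul [DecidableEq ι] {K : Type*} [Field K]
    (A : Matrix ι ι K) (μ : K) : μ ∈ spectrum K A ↔ ∃ v ≠ 0, A *ᵥ v = μ • v := by
  rw [← spectrum_toLin', ← Module.End.hasEigenvalue_iff_mem_spectrum]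
  constructor
  · intro h
    obtain ⟨v, hv⟩ := h.exists_hasEigenvector
    exact ⟨v, hv.2, by simpa using hv.apply_eq_smul⟩
  · rintro ⟨v, hv0, hv⟩
    exact Module.End.hasEigenvalue_of_hasEigenvector
      ⟨Module.End.mem_eigenspace_iff.2 (by simpa using hv), hv0⟩

theorem mulVec_mono {A : Matrix ι ι ℝ} (hA : ∀ i j, 0 ≤ A i j) : Monotone (A *ᵥ ·) :=
  fun _ _ h i => sum_le_sum fun j _ => mul_le_mul_of_nonneg_left (h j) (hA i j)

theorem pow_mulVec_mono [DecidableEq ι] {A : Matrix ι ι ℝ} (hA : ∀ i j, 0 ≤ A i j) (n : ℕ) :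
    Monotone (A ^ n *ᵥ ·) := by
  induction n with
  | zero => exact fun _ _ h => by simpa using h
  | succ n ih =>
    intro v v' h
    simp only [pow_succ', ← mulVec_mulVec]
    exact mulVec_mono hA (ih h)

theorem pow_mulVec_eq_of_mulVec_eq_smul [DecidableEq ι] {R : Type*} [CommSemiring R]
    {A : Matrix ι ι R} {r : R} {w : ι → R} (hAw : A *ᵥ w = r • w) (n : ℕ) :
    A ^ n *ᵥ w = r ^ n • w := by
  induction n with
  | zero => simp
  | succ n ih => rw [pow_succ', ← mulVec_mulVec, ih, mulVec_smul, hAw, smul_smul, pow_succ]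

theorem mulVec_pos_of_pos {A : Matrix ι ι ℝ} (hA : ∀ i j, 0 < A i j) {x : ι → ℝ} (hx0 : 0 ≤ x)
    (hx : x ≠ 0) (i : ι) : 0 < (A *ᵥ x) i := by
  obtain ⟨j, hj⟩ : ∃ j, 0 < x j := by
    by_contra! h
    exact hx (le_antisymm h hx0)
  exact sum_pos' (fun k _ => mul_nonneg (hA i k).le (hx0 k)) ⟨j, mem_univ j, mul_pos (hA i j) hj⟩

theorem sum_paths_eq_pow_mulVec {R : Type*} [CommSemiring R] [DecidableEq ι]
    (A : Matrix ι ι R) (n : ℕ) (v : ι → R) (i : ι) :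
    (∑ y : Fin (n + 1) → ι, if y 0 = i then
      (∏ k : Fin n, A (y k.castSucc) (y k.succ)) * v (y (Fin.last n)) else 0) =
      (A ^ n *ᵥ v) i := by
  induction n generalizing v with
  | zero => simp [← (Equiv.funUnique (Fin 1) ι).symm.sum_comp]
  | succ n ih =>
    rw [pow_succ, ← mulVec_mulVec, ← ih, ← (Fin.snocEquiv fun _ => ι).sum_comp,
      Fintype.sum_prod_type_right]
    refine sum_congr rfl fun z _ => ?_
    simp only [Fin.snocEquiv_apply, Fin.prod_univ_castSucc, Fin.succ_castSucc, Fin.snoc_castSucc,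
      Fin.succ_last, Fin.snoc_last, ← Fin.castSucc_zero]
    split_ifs
    · simp only [mulVec, dotProduct, mul_sum, mul_assoc]
    · exact sum_const_zero

theorem smul_le_pow_mulVec [DecidableEq ι] {A : Matrix ι ι ℝ} (hA : ∀ i j, 0 ≤ A i j)
    {r : ℝ} {w : ι → ℝ} (hAw : A *ᵥ w = r • w) {v : ι → ℝ} {c : ℝ} (hv : c • w ≤ v) (n : ℕ) :
    (c * r ^ n) • w ≤ A ^ n *ᵥ v := by
  simpa [mulVec_smul, pow_mulVec_eq_of_mulVec_eq_smul hAw, mul_smul] using pow_mulVec_mono hA n hv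

theorem pow_mulVec_le_smul [DecidableEq ι] {A : Matrix ι ι ℝ} (hA : ∀ i j, 0 ≤ A i j)
    {r : ℝ} {w : ι → ℝ} (hAw : A *ᵥ w = r • w) {v : ι → ℝ} {C : ℝ} (hv : v ≤ C • w) (n : ℕ) :
    A ^ n *ᵥ v ≤ (C * r ^ n) • w := by
  simpa [mulVec_smul, pow_mulVec_eq_of_mulVec_eq_smul hAw, mul_smul] using pow_mulVec_mono hA n hv

variable [Nonempty ι]

noncomputable def collatzWielandt (A : Matrix ι ι ℝ) (x : ι → ℝ) : ℝ :=
  univ.inf' univ_nonempty fun i => (A *ᵥ x) i / x i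

theorem lt_collatzWielandt_iff {A : Matrix ι ι ℝ} {x : ι → ℝ} (hx : ∀ i, 0 < x i) {c : ℝ} :
    c < collatzWielandt A x ↔ ∀ i, c * x i < (A *ᵥ x) i := by
  simp [collatzWielandt, lt_inf'_iff, lt_div_iff₀ (hx _)]

theorem smul_le_mulVec_collatzWielandt {A : Matrix ι ι ℝ} {x : ι → ℝ} (hx : ∀ i, 0 < x i) :
    collatzWielandt A x • x ≤ A *ᵥ x := fun i =>
  (le_div_iff₀ (hx i)).1 (inf'_le _ (mem_univ i))

theorem collatzWielandt_smul (A : Matrix ι ι ℝ) (x : ι → ℝ) {c : ℝ} (hc : 0 < c) :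
    collatzWielandt A (c • x) = collatzWielandt A x := by
  simp only [collatzWielandt, mulVec_smul, Pi.smul_apply, smul_eq_mul,
    mul_div_mul_left _ _ hc.ne']

theorem continuousOn_collatzWielandt (A : Matrix ι ι ℝ) :
    ContinuousOn (collatzWielandt A) {x | ∀ i, 0 < x i} :=
  ContinuousOn.finset_inf'_apply _ fun i _ =>
    ((continuous_apply i).comp (continuous_const.matrix_mulVec continuous_id)).continuousOn.div
      (continuous_apply i).continuousOn fun _ hx => (hx i).ne'

theorem exists_pos_eigenvector_of_pos {A : Matrix ι ι ℝ} (hA : ∀ i j, 0 < A i j) :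
    ∃ r : ℝ, 0 < r ∧ ∃ w : ι → ℝ, (∀ i, 0 < w i) ∧ A *ᵥ w = r • w := by
  classical
  have hApos : ∀ x ∈ stdSimplex ℝ ι, ∀ i, 0 < (A *ᵥ x) i := fun x hx =>
    mulVec_pos_of_pos hA hx.1 fun h => by simpa [h] using hx.2
  obtain ⟨x, hx, hmax⟩ := (isCompact_stdSimplex ℝ ι).exists_isMaxOn
    ⟨_, single_mem_stdSimplex ℝ (Classical.arbitrary ι)⟩
    ((continuousOn_collatzWielandt A).comp
      (continuous_const.matrix_mulVec continuous_id).continuousOn hApos)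
  set y := A *ᵥ x
  set r := collatzWielandt A y
  have hy : ∀ i, 0 < y i := hApos x hx
  have hAy : ∀ i, 0 < (A *ᵥ y) i :=
    mulVec_pos_of_pos hA (fun j => (hy j).le) fun h => by simpa [h] using hy (Classical.arbitrary ι)
  refine ⟨r, (lt_collatzWielandt_iff (c := 0) hy).2 fun i => by simpa using hAy i, y, hy, ?_⟩
  by_contra hne
  have hgap : ∀ i, r * (A *ᵥ y) i < (A *ᵥ (A *ᵥ y)) i := by
    intro i
    have := mulVec_pos_of_pos hA (sub_nonneg.2 (smul_le_mulVec_collatzWielandt (A := A) hy))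
      (sub_ne_zero.2 hne) i
    simpa [mulVec_sub, mulVec_smul] using this
  have hs : 0 < ∑ i, y i := sum_pos (fun i _ => hy i) univ_nonempty
  have hx' : (∑ i, y i)⁻¹ • y ∈ stdSimplex ℝ ι :=
    ⟨fun i => smul_nonneg (inv_pos.2 hs).le (hy i).le, by simp [← mul_sum, hs.ne']⟩
  refine (isMaxOn_iff.1 hmax _ hx').not_gt ?_
  simp only [Function.comp_apply, id, mulVec_smul, collatzWielandt_smul _ _ (inv_pos.2 hs)]
  exact (lt_collatzWielandt_iff hAy).2 hgap

theorem norm_le_of_mem_spectrum_of_pos_eigenvector [DecidableEq ι] {A : Matrix ι ι ℝ}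
    (hA : ∀ i j, 0 ≤ A i j) {r : ℝ} {w : ι → ℝ} (hw : ∀ i, 0 < w i) (hAw : A *ᵥ w = r • w)
    {z : ℂ} (hz : z ∈ spectrum ℂ (A.map Complex.ofReal)) : ‖z‖ ≤ r := by
  obtain ⟨v, hv0, hv⟩ := (mem_spectrum_iff_exists_mulVec_eq_smul _ _).1 hz
  obtain ⟨i, hi⟩ := Finite.exists_max fun j => ‖v j‖ / w j
  have hvw : ∀ j, ‖v j‖ ≤ ‖v i‖ / w i * w j := fun j => (div_le_iff₀ (hw j)).1 (hi j)
  have hvi : 0 < ‖v i‖ := by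
    obtain ⟨j, hj⟩ := Function.ne_iff.1 hv0
    exact (div_pos_iff_of_pos_right (hw i)).1 ((div_pos (norm_pos_iff.2 hj) (hw j)).trans_le (hi j))
  have key : ‖z‖ * ‖v i‖ ≤ r * ‖v i‖ := calc
    ‖z‖ * ‖v i‖ = ‖∑ j, (A i j : ℂ) * v j‖ := by
      rw [← norm_mul, ← smul_eq_mul, ← Pi.smul_apply, ← hv]; rfl
    _ ≤ ∑ j, A i j * ‖v j‖ := (norm_sum_le _ _).trans_eq <| sum_congr rfl fun j _ => by
      rw [norm_mul, Complex.norm_real, Real.norm_of_nonneg (hA i j)]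
    _ ≤ ∑ j, A i j * (‖v i‖ / w i * w j) :=
      sum_le_sum fun j _ => mul_le_mul_of_nonneg_left (hvw j) (hA i j)
    _ = ‖v i‖ / w i * (A *ᵥ w) i := by
      rw [mulVec, dotProduct, mul_sum]; exact sum_congr rfl fun j _ => by ring
    _ = r * ‖v i‖ := by
      rw [hAw, Pi.smul_apply, smul_eq_mul]; field_simp [(hw i).ne']
  exact le_of_mul_le_mul_right key hvi

theorem isGreatest_re_spectrum_of_pos_eigenvector [DecidableEq ι] {A : Matrix ι ι ℝ}
    (hA : ∀ i j, 0 ≤ A i j) {r : ℝ} {w : ι → ℝ} (hw : ∀ i, 0 < w i) (hAw : A *ᵥ w = r • w) :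
    IsGreatest {x : ℝ | ∃ z ∈ spectrum ℂ (A.map Complex.ofReal), x = z.re} r := by
  obtain ⟨i⟩ := ‹Nonempty ι›
  refine ⟨⟨r, (mem_spectrum_iff_exists_mulVec_eq_smul _ _).2 ⟨Complex.ofReal ∘ w, ?_, ?_⟩, by simp⟩,
    ?_⟩
  · exact fun h => (hw i).ne' (by simpa using congrFun h i)
  · ext j
    exact (RingHom.map_mulVec Complex.ofRealHom A w j).symm.trans (by simp [hAw])
  · rintro _ ⟨z, hz, rfl⟩
    exact (Complex.re_le_norm z).trans (norm_le_of_mem_spectrum_of_pos_eigenvector hA hw hAw hz)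

theorem exists_pow_mulVec_bounds [DecidableEq ι] {A : Matrix ι ι ℝ} (hA : ∀ i j, 0 ≤ A i j)
    {r : ℝ} {w : ι → ℝ} (hw : ∀ i, 0 < w i) (hAw : A *ᵥ w = r • w) {lo hi : ι → ℝ}
    (hlo : ∀ i, 0 < lo i) (hhi : ∀ i, 0 < hi i) :
    ∃ K₁ : ℝ, 0 < K₁ ∧ ∃ K₂ : ℝ, 0 < K₂ ∧ ∀ v, lo ≤ v → v ≤ hi → ∀ n i,
      K₁ * r ^ n ≤ (A ^ n *ᵥ v) i ∧ (A ^ n *ᵥ v) i ≤ K₂ * r ^ n := by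
  obtain ⟨c, hc, -, -, hcw, -⟩ := exists_pos_smul_le_and_le_smul hlo hw
  obtain ⟨-, -, C, hC, -, hCw⟩ := exists_pos_smul_le_and_le_smul hhi hw
  obtain ⟨d, hd, D, hD, hdw, hDw⟩ := exists_pos_smul_le_and_le_smul hw fun _ => one_pos
  have hr : 0 ≤ r := by
    obtain ⟨i⟩ := ‹Nonempty ι›
    have : 0 ≤ r * w i := by
      rw [← smul_eq_mul, ← Pi.smul_apply, ← hAw]
      exact sum_nonneg fun j _ => mul_nonneg (hA i j) (hw j).le
    exact nonneg_of_mul_nonneg_left this (hw i)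
  refine ⟨c * d, by positivity, C * D, by positivity, fun v hlov hvhi n i => ⟨?_, ?_⟩⟩
  · calc c * d * r ^ n = c * r ^ n * d := by ring
      _ ≤ c * r ^ n * w i := mul_le_mul_of_nonneg_left (by simpa using hdw i) (by positivity)
      _ ≤ (A ^ n *ᵥ v) i := smul_le_pow_mulVec hA hAw (hcw.trans hlov) n i
  · calc (A ^ n *ᵥ v) i ≤ C * r ^ n * w i := pow_mulVec_le_smul hA hAw (hvhi.trans hCw) n i
      _ ≤ C * r ^ n * D := mul_le_mul_of_nonneg_left (by simpa using hDw i) (by positivity)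
      _ = C * D * r ^ n := by ring

end Matrix

theorem Real.rpow_mem_uIcc_one {x θ : ℝ} (hx : 0 < x) (hθ : θ ∈ Set.Icc 0 1) :
    x ^ θ ∈ Set.uIcc 1 x := by
  rcases le_total 1 x with h | h
  · rw [Set.uIcc_of_le h]
    exact ⟨Real.one_le_rpow h hθ.1, by simpa using Real.rpow_le_rpow_of_exponent_le h hθ.2⟩
  · rw [Set.uIcc_of_ge h]
    exact ⟨by simpa using Real.rpow_le_rpow_of_exponent_ge hx h hθ.2, Real.rpow_le_one hx.le h hθ.1⟩

theorem sum_paths_exp_eq_pow_mulVec {ι : Type*} [Fintype ι] [DecidableEq ι] (P : Matrix ι ι ℝ)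
    (b : ι → ℝ) (τ s : ℝ) (n : ℕ) (i₀ : ι) :
    (∑ y : Fin (n + 1) → ι, if y 0 = i₀ then
      (∏ k : Fin n, P (y k.castSucc) (y k.succ)) *
        Real.exp (τ * ∑ k : Fin n, b (y k.castSucc) + s * b (y (Fin.last n)))
      else 0) =
      ((of fun i j => Real.exp (τ * b i) * P i j) ^ n *ᵥ fun j => Real.exp (s * b j)) i₀ := by
  rw [← sum_paths_eq_pow_mulVec]
  refine sum_congr rfl fun y _ => ?_
  split_ifs
  · simp only [of_apply, prod_mul_distrib, Real.exp_add, mul_sum, Real.exp_sum]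
    ring
  · rfl

theorem exponential_functional_discrete_observation_estimate_general
    (M : ℕ) (hM : 0 < M) (P : Matrix (Fin M) (Fin M) ℝ)
    (hpos : ∀ i j, 0 < P i j)
    (b : Fin M → ℝ) (τ : ℝ) (hτ : 0 < τ)
    (lam1 : ℝ)
    (hlam : IsGreatest {x : ℝ | ∃ z ∈
        spectrum ℂ ((Matrix.of fun i j => Real.exp (τ * b i) * P i j).map Complex.ofReal),
        x = z.re} lam1) :
    ∃ K₁ K₂ : ℝ, 0 < K₁ ∧ 0 < K₂ ∧ ∃ T : ℝ, 0 < T ∧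
      ∀ t : ℝ, T ≤ t → ∀ i₀ : Fin M,
        K₁ * lam1 ^ (t / τ) ≤
          (∑ y : Fin (⌊t / τ⌋₊ + 1) → Fin M,
            if y 0 = i₀ then
              (∏ k : Fin ⌊t / τ⌋₊, P (y k.castSucc) (y k.succ)) *
                Real.exp (τ * ∑ k : Fin ⌊t / τ⌋₊, b (y k.castSucc)
                  + (t - (⌊t / τ⌋₊ : ℝ) * τ) * b (y (Fin.last ⌊t / τ⌋₊)))
            else 0) ∧
        (∑ y : Fin (⌊t / τ⌋₊ + 1) → Fin M,
            if y 0 = i₀ then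
              (∏ k : Fin ⌊t / τ⌋₊, P (y k.castSucc) (y k.succ)) *
                Real.exp (τ * ∑ k : Fin ⌊t / τ⌋₊, b (y k.castSucc)
                  + (t - (⌊t / τ⌋₊ : ℝ) * τ) * b (y (Fin.last ⌊t / τ⌋₊)))
            else 0) ≤ K₂ * lam1 ^ (t / τ) := by
  have : Nonempty (Fin M) := ⟨⟨0, hM⟩⟩
  set A : Matrix (Fin M) (Fin M) ℝ := Matrix.of fun i j => Real.exp (τ * b i) * P i j
  have hA : ∀ i j, 0 < A i j := fun i j => mul_pos (Real.exp_pos _) (hpos i j)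
  obtain ⟨r, hr, w, hw, hAw⟩ := exists_pos_eigenvector_of_pos hA
  obtain rfl : lam1 = r :=
    hlam.unique (isGreatest_re_spectrum_of_pos_eigenvector (fun i j => (hA i j).le) hw hAw)
  obtain ⟨K₁, hK₁, K₂, hK₂, hK⟩ := exists_pow_mulVec_bounds (fun i j => (hA i j).le) hw hAw
    (lo := fun j => 1 ⊓ Real.exp (τ * b j)) (hi := fun j => 1 ⊔ Real.exp (τ * b j))
    (fun j => by positivity) (fun j => by positivity)
  refine ⟨K₁ / (1 ⊔ lam1), K₂ / (1 ⊓ lam1), by positivity,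
    div_pos hK₂ (lt_inf_iff.2 ⟨one_pos, hr⟩), τ, hτ, fun t ht i₀ => ?_⟩
  set n := ⌊t / τ⌋₊
  set θ := t / τ - n with hθ_def
  have hθ : θ ∈ Set.Icc 0 1 :=
    ⟨sub_nonneg.2 (Nat.floor_le (div_nonneg (hτ.le.trans ht) hτ.le)),
      by linarith [Nat.lt_floor_add_one (t / τ)]⟩
  have hv : ∀ j, Real.exp ((t - n * τ) * b j) = Real.exp (τ * b j) ^ θ := fun j => by
    rw [← Real.exp_mul, hθ_def]
    field_simp
  obtain ⟨hlow, hupp⟩ := hK (fun j => Real.exp ((t - n * τ) * b j))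
    (fun j => by simpa only [hv] using (Real.rpow_mem_uIcc_one (Real.exp_pos _) hθ).1)
    (fun j => by simpa only [hv] using (Real.rpow_mem_uIcc_one (Real.exp_pos _) hθ).2) n i₀
  have hrθ := Real.rpow_mem_uIcc_one hr hθ
  rw [sum_paths_exp_eq_pow_mulVec, show lam1 ^ (t / τ) = lam1 ^ n * lam1 ^ θ by
    rw [← Real.rpow_natCast, ← Real.rpow_add hr, hθ_def, add_sub_cancel]]
  constructor
  · calc K₁ / (1 ⊔ lam1) * (lam1 ^ n * lam1 ^ θ) = K₁ * lam1 ^ n * (lam1 ^ θ / (1 ⊔ lam1)) := by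
          ring
      _ ≤ K₁ * lam1 ^ n :=
          mul_le_of_le_one_right (by positivity) ((div_le_one (by positivity)).2 hrθ.2)
      _ ≤ _ := hlow
  · calc _ ≤ K₂ * lam1 ^ n := hupp
      _ ≤ K₂ * lam1 ^ n * (lam1 ^ θ / (1 ⊓ lam1)) :=
          le_mul_of_one_le_right (by positivity) ((one_le_div (lt_inf_iff.2 ⟨one_pos, hr⟩)).2 hrθ.1)
      _ = _ := by ring

/-- Two-sided geometric estimate for the exponential functional of the
discretely observed chain: with `P` the (entrywise positive) transition matrix
of the chain `(Y_n)` on `Fin M`, `b : Fin M → ℝ`, `τ > 0`, and `λ̄₁` the Perron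
eigenvalue of `(exp (τ * b i) * P i j)`, the expectation
`E_{i₀} [exp (τ ∑_{k<⌊t/τ⌋} b(Y_k) + (t - ⌊t/τ⌋ τ) b(Y_{⌊t/τ⌋}))]`
(written as a sum over paths) is bounded above and below by constant multiples
of `λ̄₁ ^ (t / τ)` for all large `t`, uniformly in the initial state `i₀`. -/
theorem exponential_functional_discrete_observation_estimate
    (M : ℕ) (hM : 0 < M) (P : Matrix (Fin M) (Fin M) ℝ)
    (hpos : ∀ i j, 0 < P i j) (hrow : ∀ i, ∑ j, P i j = 1)
    (b : Fin M → ℝ) (τ : ℝ) (hτ : 0 < τ)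
    (lam1 : ℝ)
    (hlam : IsGreatest {x : ℝ | ∃ z ∈
        spectrum ℂ ((Matrix.of fun i j => Real.exp (τ * b i) * P i j).map Complex.ofReal),
        x = z.re} lam1) :
    ∃ K₁ K₂ : ℝ, 0 < K₁ ∧ 0 < K₂ ∧ ∃ T : ℝ, 0 < T ∧
      ∀ t : ℝ, T ≤ t → ∀ i₀ : Fin M,
        K₁ * lam1 ^ (t / τ) ≤
          (∑ y : Fin (⌊t / τ⌋₊ + 1) → Fin M,
            if y 0 = i₀ then
              (∏ k : Fin ⌊t / τ⌋₊, P (y k.castSucc) (y k.succ)) *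
                Real.exp (τ * ∑ k : Fin ⌊t / τ⌋₊, b (y k.castSucc)
                  + (t - (⌊t / τ⌋₊ : ℝ) * τ) * b (y (Fin.last ⌊t / τ⌋₊)))
            else 0) ∧
        (∑ y : Fin (⌊t / τ⌋₊ + 1) → Fin M,
            if y 0 = i₀ then
              (∏ k : Fin ⌊t / τ⌋₊, P (y k.castSucc) (y k.succ)) *
                Real.exp (τ * ∑ k : Fin ⌊t / τ⌋₊, b (y k.castSucc)
                  + (t - (⌊t / τ⌋₊ : ℝ) * τ) * b (y (Fin.last ⌊t / τ⌋₊)))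
            else 0) ≤ K₂ * lam1 ^ (t / τ) :=
  exponential_functional_discrete_observation_estimate_general M hM P hpos b τ hτ lam1 hlam
end

section
/- Let $(\zeta_k)$ be the jump times of a Poisson point process $p$ on $[0,L]$ with finite intensity measure, and suppose two càdlàg $\{1,2\}$-valued processes $\Lambda$ and $\bar\Lambda$ are driven by $p$ via indicator jump rules: $\Lambda$ jumps $1\to2$ when $p(\zeta)\in[0,q_{12}(X(\zeta)))$ and $2\to1$ when $p(\zeta)\in[q_1(X(\zeta)),q_1(X(\zeta))+q_{21}(X(\zeta)))$, while $\bar\Lambda$ jumps $1\to2$ when $p(\zeta)\in[0,\bar q_{12})$ and $2\to1$ when $p(\zeta)\in[\bar q_{12},\bar q_{12}+\bar q_{21})$, where $\bar q_{12}=\sup_x q_{12}(x)$ and $\bar q_{21}=\inf_x q_{21}(x)>0$. If $\bar q_{12}+\bar q_{21}\le q_{12}(x)+q_{21}(x)$ for all $x$, and $\Lambda(0)\le\bar\Lambda(0)$, then $\Lambda(t)\le\bar\Lambda(t)$ for all $t\ge0$ almost surely. -/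
/-- Pathwise order-preserving comparison for two-state switching processes driven
by a common Poisson point process.  The jump times are `ζ k` (strictly increasing,
tending to `∞`, with `ζ 0 = 0`), the marks are `u k ∈ [0, L]`, and both `Λ` and
`Λ̄` take values in `{1, 2}`, are constant on `[ζ k, ζ (k+1))`, and jump at
`ζ (k+1)` according to the indicated indicator rules, `Λ` with state-dependent
rates `q₁₂ (X t), q₂₁ (X t)` and `Λ̄` with the constant rates
`q̄₁₂ = sup_x q₁₂ x`, `q̄₂₁ = inf_x q₂₁ x > 0`.  If
`q̄₁₂ + q̄₂₁ ≤ q₁₂ x + q₂₁ x` for all `x` and `Λ 0 ≤ Λ̄ 0`, then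
`Λ t ≤ Λ̄ t` for all `t ≥ 0`. -/
theorem two_state_order_preserving_comparison
    {d : ℕ} (q12 q21 : EuclideanSpace ℝ (Fin d) → ℝ) (qb12 qb21 : ℝ)
    (hq12 : ∀ x, 0 ≤ q12 x) (hq21 : ∀ x, 0 ≤ q21 x)
    (hsup : IsLUB (Set.range q12) qb12) (hinf : IsGLB (Set.range q21) qb21)
    (hqb21 : 0 < qb21)
    (hsum : ∀ x, qb12 + qb21 ≤ q12 x + q21 x)
    (X : ℝ → EuclideanSpace ℝ (Fin d))
    (ζ : ℕ → ℝ) (hζ0 : ζ 0 = 0) (hζmono : StrictMono ζ)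
    (hζtop : Filter.Tendsto ζ Filter.atTop Filter.atTop)
    (u : ℕ → ℝ)
    (Λ Λb : ℝ → ℕ)
    (hΛval : ∀ t, Λ t = 1 ∨ Λ t = 2) (hΛbval : ∀ t, Λb t = 1 ∨ Λb t = 2)
    -- constancy between jump times
    (hΛconst : ∀ k, ∀ t, ζ k ≤ t → t < ζ (k + 1) → Λ t = Λ (ζ k))
    (hΛbconst : ∀ k, ∀ t, ζ k ≤ t → t < ζ (k + 1) → Λb t = Λb (ζ k))
    -- jump rules for the state-dependent process Λ
    (hΛjump : ∀ k,
      Λ (ζ (k + 1)) =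
        if Λ (ζ k) = 1 then
          (if 0 ≤ u (k + 1) ∧ u (k + 1) < q12 (X (ζ (k + 1))) then 2 else 1)
        else
          (if q12 (X (ζ (k + 1))) ≤ u (k + 1) ∧
              u (k + 1) < q12 (X (ζ (k + 1))) + q21 (X (ζ (k + 1))) then 1 else 2))
    -- jump rules for the dominating Markov chain Λ̄
    (hΛbjump : ∀ k,
      Λb (ζ (k + 1)) =
        if Λb (ζ k) = 1 then
          (if 0 ≤ u (k + 1) ∧ u (k + 1) < qb12 then 2 else 1)
        else
          (if qb12 ≤ u (k + 1) ∧ u (k + 1) < qb12 + qb21 then 1 else 2))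
    (hinit : Λ 0 ≤ Λb 0) :
    ∀ t : ℝ, 0 ≤ t → Λ t ≤ Λb t := by
  have hub : ∀ x, q12 x ≤ qb12 := fun x => hsup.1 ⟨x, rfl⟩
  have key : ∀ k, Λ (ζ k) ≤ Λb (ζ k) := by
    intro k
    induction k with
    | zero => simpa [hζ0] using hinit
    | succ k ih =>
      have hj := hΛjump k
      have hbj := hΛbjump k
      rcases hΛval (ζ k) with h1 | h2 <;> rcases hΛbval (ζ k) with hb1 | hb2
      · -- (1,1)
        rw [if_pos h1] at hj; rw [if_pos hb1] at hbj
        by_cases hc : 0 ≤ u (k + 1) ∧ u (k + 1) < q12 (X (ζ (k + 1)))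
        · rw [if_pos hc] at hj
          rw [if_pos ⟨hc.1, lt_of_lt_of_le hc.2 (hub _)⟩] at hbj
          omega
        · rw [if_neg hc] at hj
          rcases hΛbval (ζ (k + 1)) with h | h <;> omega
      · -- (1,2)
        rw [if_pos h1] at hj
        rw [if_neg (by rw [hb2]; omega)] at hbj
        by_cases hc : 0 ≤ u (k + 1) ∧ u (k + 1) < q12 (X (ζ (k + 1)))
        · rw [if_pos hc] at hj
          rw [if_neg (fun hd => absurd (lt_of_lt_of_le hc.2 (hub _)) (not_lt.2 hd.1))] at hbj
          omega
        · rw [if_neg hc] at hj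
          rcases hΛbval (ζ (k + 1)) with h | h <;> omega
      · -- (2,1): impossible
        rw [h2, hb1] at ih; omega
      · -- (2,2)
        rw [if_neg (by rw [h2]; omega)] at hj
        rw [if_neg (by rw [hb2]; omega)] at hbj
        by_cases hc : qb12 ≤ u (k + 1) ∧ u (k + 1) < qb12 + qb21
        · rw [if_pos hc] at hbj
          rw [if_pos ⟨le_trans (hub _) hc.1, lt_of_lt_of_le hc.2 (hsum _)⟩] at hj
          omega
        · rw [if_neg hc] at hbj
          rcases hΛval (ζ (k + 1)) with h | h <;> omega
  intro t ht
  have hex : ∃ n, t < ζ n := (hζtop.eventually (Filter.eventually_gt_atTop t)).exists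
  have hn : t < ζ (Nat.find hex) := Nat.find_spec hex
  have hn0 : Nat.find hex ≠ 0 := by
    intro h
    rw [h, hζ0] at hn
    exact absurd hn (not_lt.2 ht)
  obtain ⟨k, hkk⟩ := Nat.exists_eq_succ_of_ne_zero hn0
  rw [hkk] at hn
  have hk : ζ k ≤ t := not_lt.1 fun hlt => Nat.find_min hex (by omega) hlt
  rw [hΛconst k t hk hn, hΛbconst k t hk hn]
  exact key k
end

section
/- Let $\bar Q$ be a conservative $Q$-matrix on a finite set $\S$, $C:\S\to\mathbb{R}$, $p>0$, and set $\bar Q_p=\bar Q+p\,\mathrm{diag}(C(1),\dots,C(M))$ and $\eta_{p,C}=-\max\{\mathrm{Re}(\gamma):\gamma\in\mathrm{Spec}(\bar Q_p)\}$. If $\bar Q$ is irreducible, then the matrix exponential satisfies: there exist constants $\kappa_1(p),\kappa_2(p)>0$ such that for every $i_0\in\S$ and all $t>0$, $\kappa_1(p)e^{-\eta_{p,C}t}\le\big(e^{t\bar Q_p}\mathbf 1\big)_{i_0}\le\kappa_2(p)e^{-\eta_{p,C}t}$. -/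
/-!
Shifting `A = Q̄ + p • diagonal C` by a multiple of the identity makes it a nonnegative irreducible
matrix, so `e^{tA}` has nonnegative entries and `e^A` positive ones. The largest and smallest row
sums `f t`, `g t` of `e^{tA}` are then sub- and supermultiplicative, and positivity of `e^A` gives
the Harnack inequality `δ f t ≤ g (1 + t)`. Since `n log g m ≤ log g (mn) ≤ log f (mn) ≤ m log f n`,
a single rate `l` separates `log g n / n` from `log f n / n`, whence `e^{tA} 𝟙 ≍ e^{lt}`.

This rate is `max Re Spec A`. The upper bound gives `|e^{tz}| ≤ ‖e^{tA}‖_∞ ≤ κ₂ e^{lt}` for every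
eigenvalue `z`, so `Re z ≤ l`. If `l` were not an eigenvalue, `w = (l - A)⁻¹ 𝟙` would make
`e^{-lt} (e^{tA} w)ᵢ` bounded below by the upper bound, yet decreasing at rate `κ₁` by the lower one.
-/

open Finset Filter Set Matrix NormedSpace

theorem Subadditive.exists_linear_between {φ ψ : ℕ → ℝ} (hφ : Subadditive φ)
    (hψ : ∀ m n, ψ m + ψ n ≤ ψ (m + n)) (hψφ : ∀ n, ψ n ≤ φ n) :
    ∃ l : ℝ, ∀ n : ℕ, ψ n ≤ l * n ∧ l * n ≤ φ n := by
  have hφ_mul : ∀ k m, φ ((k + 1) * m) ≤ (k + 1) * φ m := by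
    intro k m
    induction k with
    | zero => simp
    | succ k ih =>
      calc φ ((k + 1 + 1) * m) = φ ((k + 1) * m + m) := by ring_nf
        _ ≤ φ ((k + 1) * m) + φ m := hφ _ _
        _ ≤ ((k + 1 : ℕ) + 1) * φ m := by push_cast; linarith
  have hψ_mul : ∀ k m, (k + 1) * ψ m ≤ ψ ((k + 1) * m) := by
    intro k m
    induction k with
    | zero => simp
    | succ k ih =>
      calc ((k + 1 : ℕ) + 1) * ψ m ≤ ψ ((k + 1) * m) + ψ m := by push_cast; linarith
        _ ≤ ψ ((k + 1) * m + m) := hψ _ _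
        _ = ψ ((k + 1 + 1) * m) := by ring_nf
  have key : ∀ m n : ℕ, ψ (m + 1) / (m + 1 : ℕ) ≤ φ (n + 1) / (n + 1 : ℕ) := by
    intro m n
    rw [div_le_div_iff₀ (by positivity) (by positivity)]
    have h₁ := hψ_mul n (m + 1)
    have h₂ := hφ_mul m (n + 1)
    have h₃ := hψφ ((n + 1) * (m + 1))
    rw [mul_comm (m + 1)] at h₂
    push_cast at *
    linarith
  have hbdd : BddAbove (range fun m : ℕ => ψ (m + 1) / (m + 1 : ℕ)) :=
    ⟨φ 1, by rintro _ ⟨m, rfl⟩; simpa using key m 0⟩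
  refine ⟨⨆ m : ℕ, ψ (m + 1) / (m + 1 : ℕ), fun n => ?_⟩
  rcases n with _ | n
  · simpa using ⟨by linarith [hψ 0 0], by linarith [hφ 0 0]⟩
  · have hn : (0 : ℝ) < (n + 1 : ℕ) := by positivity
    exact ⟨(div_le_iff₀ hn).1 (le_ciSup hbdd n), (le_div_iff₀ hn).1 (ciSup_le fun m => key m n)⟩

theorem exists_exp_between_of_submultiplicative {f g : ℕ → ℝ} (hg_pos : ∀ n, 0 < g n)
    (hgf : ∀ n, g n ≤ f n) (hf_mul : ∀ m n, f (m + n) ≤ f m * f n)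
    (hg_mul : ∀ m n, g m * g n ≤ g (m + n)) :
    ∃ l : ℝ, ∀ n : ℕ, g n ≤ Real.exp (l * n) ∧ Real.exp (l * n) ≤ f n := by
  have hf_pos n : 0 < f n := (hg_pos n).trans_le (hgf n)
  obtain ⟨l, hl⟩ := Subadditive.exists_linear_between (φ := fun n => Real.log (f n))
    (ψ := fun n => Real.log (g n))
    (fun m n => by
      simp only
      rw [← Real.log_mul (hf_pos m).ne' (hf_pos n).ne']
      exact Real.log_le_log (hf_pos _) (hf_mul m n))
    (fun m n => by
      rw [← Real.log_mul (hg_pos m).ne' (hg_pos n).ne']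
      exact Real.log_le_log (mul_pos (hg_pos m) (hg_pos n)) (hg_mul m n))
    (fun n => Real.log_le_log (hg_pos n) (hgf n))
  exact ⟨l, fun n => ⟨(Real.log_le_iff_le_exp (hg_pos n)).1 (hl n).1,
    (Real.le_log_iff_exp_le (hf_pos n)).1 (hl n).2⟩⟩

theorem exp_mul_le_exp_abs_mul_exp_mul {l s t : ℝ} (h : |s - t| ≤ 1) :
    Real.exp (l * s) ≤ Real.exp |l| * Real.exp (l * t) := by
  rw [← Real.exp_add, Real.exp_le_exp]
  have : l * (s - t) ≤ |l| :=
    (le_abs_self _).trans (by rw [abs_mul]; exact mul_le_of_le_one_right (abs_nonneg l) h)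
  linarith

theorem exists_exp_bounds_of_submultiplicative {f g : ℝ → ℝ} {K F G : ℝ}
    (hg_pos : ∀ t, 0 ≤ t → 0 < g t) (hgf : ∀ t, 0 ≤ t → g t ≤ f t)
    (hfg : ∀ t, 0 ≤ t → f t ≤ K * g t)
    (hf_mul : ∀ s t, 0 ≤ s → 0 ≤ t → f (s + t) ≤ f s * f t)
    (hg_mul : ∀ s t, 0 ≤ s → 0 ≤ t → g s * g t ≤ g (s + t))
    (hF : ∀ t ∈ Icc (0 : ℝ) 1, f t ≤ F) (hG : 0 < G) (hGg : ∀ t ∈ Icc (0 : ℝ) 1, G ≤ g t) :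
    ∃ l κ₁ κ₂ : ℝ, 0 < κ₁ ∧ 0 < κ₂ ∧
      ∀ t, 0 ≤ t → κ₁ * Real.exp (l * t) ≤ g t ∧ f t ≤ κ₂ * Real.exp (l * t) := by
  have hf_pos t (ht : 0 ≤ t) : 0 < f t := (hg_pos t ht).trans_le (hgf t ht)
  have hK : 0 < K := pos_of_mul_pos_left ((hf_pos 0 le_rfl).trans_le (hfg 0 le_rfl))
    (hg_pos 0 le_rfl).le
  have hF_pos : 0 < F := (hf_pos 0 le_rfl).trans_le (hF 0 (left_mem_Icc.2 zero_le_one))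
  obtain ⟨l, hl⟩ := exists_exp_between_of_submultiplicative (f := fun n => f n)
    (g := fun n => g n) (fun n => hg_pos n n.cast_nonneg) (fun n => hgf n n.cast_nonneg)
    (fun m n => by simpa using hf_mul m n m.cast_nonneg n.cast_nonneg)
    (fun m n => by simpa using hg_mul m n m.cast_nonneg n.cast_nonneg)
  refine ⟨l, G / K * Real.exp (-|l|), F * K * Real.exp |l|, by positivity, by positivity,
    fun t ht => ?_⟩
  set n := ⌊t⌋₊
  have hs : t - n ∈ Icc (0 : ℝ) 1 :=
    ⟨sub_nonneg.2 (Nat.floor_le ht), by linarith [Nat.lt_floor_add_one t]⟩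
  have hdist : |t - n| ≤ 1 := abs_le.2 ⟨by linarith [hs.1], hs.2⟩
  have ht_split : t = t - n + n := (sub_add_cancel t n).symm
  constructor
  · calc G / K * Real.exp (-|l|) * Real.exp (l * t) ≤ G / K * f n := by
          rw [mul_assoc]
          gcongr
          rw [Real.exp_neg, inv_mul_le_iff₀ (Real.exp_pos _)]
          exact (exp_mul_le_exp_abs_mul_exp_mul hdist).trans (by gcongr; exact (hl n).2)
      _ ≤ G * g n := by
          rw [div_mul_eq_mul_div, div_le_iff₀ hK, mul_assoc, mul_comm (g n)]
          exact mul_le_mul_of_nonneg_left (hfg n n.cast_nonneg) hG.le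
      _ ≤ g (t - n) * g n := by
          gcongr
          · exact (hg_pos _ n.cast_nonneg).le
          · exact hGg _ hs
      _ ≤ g (t - n + n) := hg_mul _ _ hs.1 n.cast_nonneg
      _ = g t := by rw [← ht_split]
  · calc f t = f (t - n + n) := by rw [← ht_split]
      _ ≤ f (t - n) * f n := hf_mul _ _ hs.1 n.cast_nonneg
      _ ≤ F * (K * g n) := by
          gcongr
          · exact (hf_pos _ n.cast_nonneg).le
          · exact hF _ hs
          · exact hfg n n.cast_nonneg
      _ ≤ F * K * (Real.exp |l| * Real.exp (l * t)) := by
          rw [← mul_assoc]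
          gcongr
          exact (hl n).1.trans (exp_mul_le_exp_abs_mul_exp_mul (by rwa [abs_sub_comm]))
      _ = F * K * Real.exp |l| * Real.exp (l * t) := by ring

theorem exists_le_mul_of_harnack {f g : ℝ → ℝ} {δ F G : ℝ} (hδ : 0 < δ) (hG : 0 < G)
    (hg_pos : ∀ t, 0 ≤ t → 0 < g t) (hgf : ∀ t, 0 ≤ t → g t ≤ f t)
    (hf_mul : ∀ s t, 0 ≤ s → 0 ≤ t → f (s + t) ≤ f s * f t)
    (hharnack : ∀ t, 0 ≤ t → δ * f t ≤ g (1 + t))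
    (hF : ∀ t ∈ Icc (0 : ℝ) 1, f t ≤ F) (hGg : ∀ t ∈ Icc (0 : ℝ) 1, G ≤ g t) :
    ∃ K, ∀ t, 0 ≤ t → f t ≤ K * g t := by
  have hF_nonneg : 0 ≤ F :=
    (hg_pos 0 le_rfl).le.trans ((hgf 0 le_rfl).trans (hF 0 (left_mem_Icc.2 zero_le_one)))
  have hf₁ : 0 ≤ f 1 := (hg_pos 1 zero_le_one).le.trans (hgf 1 zero_le_one)
  refine ⟨max (F / G) (f 1 / δ), fun t ht => ?_⟩
  have hgt := (hg_pos t ht).le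
  rcases le_or_gt t 1 with ht₁ | ht₁
  · calc f t ≤ F / G * G := by rw [div_mul_cancel₀ F hG.ne']; exact hF t ⟨ht, ht₁⟩
      _ ≤ F / G * g t := by gcongr; exact hGg t ⟨ht, ht₁⟩
      _ ≤ _ := by gcongr; exact le_max_left _ _
  · calc f t = f (1 + (t - 1)) := by ring_nf
      _ ≤ f 1 * f (t - 1) := hf_mul 1 (t - 1) zero_le_one (by linarith)
      _ ≤ f 1 * (g t / δ) := by
          gcongr
          rw [le_div_iff₀' hδ]
          simpa using hharnack (t - 1) (by linarith)
      _ = f 1 / δ * g t := by ring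
      _ ≤ _ := by gcongr; exact le_max_right _ _

theorem le_of_forall_exp_mul_le {a b κ : ℝ}
    (h : ∀ t, 0 < t → Real.exp (a * t) ≤ κ * Real.exp (b * t)) : a ≤ b := by
  by_contra! hab
  have hlim : Tendsto (fun t => Real.exp ((a - b) * t)) atTop atTop :=
    Real.tendsto_exp_atTop.comp (tendsto_id.const_mul_atTop (sub_pos.2 hab))
  obtain ⟨t, hκ, ht⟩ := ((hlim.eventually_gt_atTop κ).and (eventually_gt_atTop 0)).exists
  rw [sub_mul, Real.exp_sub, lt_div_iff₀ (Real.exp_pos _)] at hκ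
  linarith [h t ht]

namespace Matrix

variable {ι : Type*} [Fintype ι]

theorem mulVec_one_apply (B : Matrix ι ι ℝ) (i : ι) : (B *ᵥ 1) i = ∑ j, B i j := by
  simp [mulVec, dotProduct]

theorem mulVec_one_nonneg {B : Matrix ι ι ℝ} (hB : ∀ i j, 0 ≤ B i j) (i : ι) :
    0 ≤ (B *ᵥ 1) i := by
  rw [mulVec_one_apply]
  exact sum_nonneg fun j _ => hB i j

theorem apply_self_le_mulVec_one {B : Matrix ι ι ℝ} (hB : ∀ i j, 0 ≤ B i j) (i : ι) :
    B i i ≤ (B *ᵥ 1) i := by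
  rw [mulVec_one_apply]
  exact single_le_sum (fun j _ => hB i j) (mem_univ i)

theorem neg_mulVec_one_mul_norm_le_mulVec {B : Matrix ι ι ℝ} (hB : ∀ i j, 0 ≤ B i j)
    (w : ι → ℝ) (i : ι) : -((B *ᵥ 1) i * ‖w‖) ≤ (B *ᵥ w) i :=
  calc -((B *ᵥ 1) i * ‖w‖) = ∑ j, B i j * -‖w‖ := by
        rw [mulVec_one_apply, sum_mul, ← sum_neg_distrib]
        simp only [mul_neg]
    _ ≤ ∑ j, B i j * w j := by
        gcongr with j
        · exact hB i j
        · exact neg_le_of_abs_le (norm_le_pi_norm w j)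

section RowSums

variable [Nonempty ι]

def maxRowSum (B : Matrix ι ι ℝ) : ℝ := univ.sup' univ_nonempty (B *ᵥ 1)

def minRowSum (B : Matrix ι ι ℝ) : ℝ := univ.inf' univ_nonempty (B *ᵥ 1)

theorem mulVec_one_le_maxRowSum (B : Matrix ι ι ℝ) (i : ι) : (B *ᵥ 1) i ≤ maxRowSum B :=
  le_sup' _ (mem_univ i)

theorem minRowSum_le_mulVec_one (B : Matrix ι ι ℝ) (i : ι) : minRowSum B ≤ (B *ᵥ 1) i :=
  inf'_le _ (mem_univ i)

theorem minRowSum_le_maxRowSum (B : Matrix ι ι ℝ) : minRowSum B ≤ maxRowSum B :=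
  let i := Classical.arbitrary ι
  (minRowSum_le_mulVec_one B i).trans (mulVec_one_le_maxRowSum B i)

theorem continuous_maxRowSum : Continuous (maxRowSum : Matrix ι ι ℝ → ℝ) :=
  Continuous.finset_sup'_apply _ fun i _ =>
    (continuous_apply i).comp (continuous_id.matrix_mulVec continuous_const)

theorem continuous_minRowSum : Continuous (minRowSum : Matrix ι ι ℝ → ℝ) :=
  Continuous.finset_inf'_apply _ fun i _ =>
    (continuous_apply i).comp (continuous_id.matrix_mulVec continuous_const)

theorem maxRowSum_mul_le {B C : Matrix ι ι ℝ} (hB : ∀ i j, 0 ≤ B i j) (hC : ∀ i j, 0 ≤ C i j) :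
    maxRowSum (B * C) ≤ maxRowSum B * maxRowSum C := by
  refine sup'_le _ _ fun i _ => ?_
  have hC_max : 0 ≤ maxRowSum C :=
    (mulVec_one_nonneg hC (Classical.arbitrary ι)).trans (mulVec_one_le_maxRowSum _ _)
  calc ((B * C) *ᵥ 1) i = ∑ k, B i k * (C *ᵥ 1) k := by rw [← mulVec_mulVec]; rfl
    _ ≤ ∑ k, B i k * maxRowSum C := by
        gcongr with k
        · exact hB i k
        · exact mulVec_one_le_maxRowSum C k
    _ = (B *ᵥ 1) i * maxRowSum C := by rw [mulVec_one_apply, sum_mul]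
    _ ≤ maxRowSum B * maxRowSum C := by gcongr; exact mulVec_one_le_maxRowSum B i

theorem minRowSum_mul_le {B C : Matrix ι ι ℝ} (hB : ∀ i j, 0 ≤ B i j) (hC : ∀ i j, 0 ≤ C i j) :
    minRowSum B * minRowSum C ≤ minRowSum (B * C) := by
  refine le_inf' _ _ fun i _ => ?_
  have hC_min : 0 ≤ minRowSum C := le_inf' _ _ fun k _ => mulVec_one_nonneg hC k
  calc minRowSum B * minRowSum C ≤ (B *ᵥ 1) i * minRowSum C := by
        gcongr; exact minRowSum_le_mulVec_one B i
    _ = ∑ k, B i k * minRowSum C := by rw [mulVec_one_apply, sum_mul]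
    _ ≤ ∑ k, B i k * (C *ᵥ 1) k := by
        gcongr with k
        · exact hB i k
        · exact minRowSum_le_mulVec_one C k
    _ = ((B * C) *ᵥ 1) i := by rw [← mulVec_mulVec]; rfl

theorem mul_maxRowSum_le_minRowSum_mul {P C : Matrix ι ι ℝ} {δ : ℝ} (hδ : 0 ≤ δ)
    (hP : ∀ i j, δ ≤ P i j) (hC : ∀ i j, 0 ≤ C i j) :
    δ * maxRowSum C ≤ minRowSum (P * C) := by
  refine le_inf' _ _ fun i _ => ?_
  obtain ⟨k, -, hk⟩ := exists_mem_eq_sup' univ_nonempty (C *ᵥ 1)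
  calc δ * maxRowSum C = δ * (C *ᵥ 1) k := by rw [maxRowSum, hk]
    _ ≤ ∑ k, δ * (C *ᵥ 1) k :=
        single_le_sum (fun j _ => mul_nonneg hδ (mulVec_one_nonneg hC j)) (mem_univ k)
    _ ≤ ∑ k, P i k * (C *ᵥ 1) k := by
        gcongr with j
        · exact mulVec_one_nonneg hC j
        · exact hP i j
    _ = ((P * C) *ᵥ 1) i := by rw [← mulVec_mulVec]; rfl

end RowSums

variable [DecidableEq ι]

theorem hasSum_exp_apply (X : Matrix ι ι ℝ) (i j : ι) :
    HasSum (fun n => (X ^ n) i j / n.factorial) (exp X i j) := by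
  have h : HasSum (fun n => (n.factorial⁻¹ : ℝ) • X ^ n) (exp X) := by
    open scoped Norms.Operator in exact exp_series_hasSum_exp' X
  simpa [div_eq_inv_mul] using Pi.hasSum.1 (Pi.hasSum.1 h i) j

theorem pow_apply_div_factorial_le_exp_apply {X : Matrix ι ι ℝ} (hX : ∀ i j, 0 ≤ X i j)
    (k : ℕ) (i j : ι) : (X ^ k) i j / k.factorial ≤ exp X i j :=
  le_hasSum (hasSum_exp_apply X i j) k fun n _ => by
    have := pow_apply_nonneg hX n i j
    positivity

theorem exp_apply_nonneg {X : Matrix ι ι ℝ} (hX : ∀ i j, 0 ≤ X i j) (i j : ι) :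
    0 ≤ exp X i j :=
  (hasSum_exp_apply X i j).nonneg fun n => by
    have := pow_apply_nonneg hX n i j
    positivity

theorem IsIrreducible.exp_apply_pos {X : Matrix ι ι ℝ} (hX : X.IsIrreducible) (i j : ι) :
    0 < exp X i j := by
  obtain ⟨k, -, hk⟩ := (isIrreducible_iff_exists_pow_pos hX.nonneg).1 hX i j
  exact (div_pos hk (by positivity)).trans_le (pow_apply_div_factorial_le_exp_apply hX.nonneg k i j)

theorem pow_apply_pos_of_chain {N : Matrix ι ι ℝ} (hN : ∀ i j, 0 ≤ N i j) {k : ℕ}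
    (γ : Fin (k + 1) → ι) (hγ : ∀ l : Fin k, 0 < N (γ l.castSucc) (γ l.succ)) :
    0 < (N ^ k) (γ 0) (γ (Fin.last k)) := by
  induction k with
  | zero => simp
  | succ k ih =>
    have h := ih (fun l => γ l.succ) fun l => (Fin.succ_castSucc l).symm ▸ hγ l.succ
    rw [pow_succ', mul_apply]
    refine lt_of_lt_of_le ?_ (single_le_sum (fun m _ => mul_nonneg (hN _ m)
      (pow_apply_nonneg hN k m _)) (mem_univ (γ 1)))
    simpa using mul_pos (hγ 0) h

theorem exists_isIrreducible_add_smul_one {A : Matrix ι ι ℝ} (hA : ∀ i j, i ≠ j → 0 ≤ A i j)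
    (hchain : ∀ i j, i ≠ j → ∃ (k : ℕ) (γ : Fin (k + 1) → ι), γ 0 = i ∧ γ (Fin.last k) = j ∧
      ∀ l : Fin k, γ l.castSucc ≠ γ l.succ → 0 < A (γ l.castSucc) (γ l.succ)) :
    ∃ c : ℝ, (A + c • 1).IsIrreducible := by
  set N := A + (∑ i, |A i i| + 1) • (1 : Matrix ι ι ℝ)
  have hN_diag i : 0 < N i i := by
    have := single_le_sum (fun i _ => abs_nonneg (A i i)) (mem_univ i)
    simp only [N, Matrix.add_apply, Matrix.smul_apply, one_apply_eq, smul_eq_mul, mul_one]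
    linarith [neg_abs_le (A i i)]
  have hN_pos i j (hij : i ≠ j → 0 < A i j) : 0 < N i j := by
    rcases eq_or_ne i j with rfl | h
    · exact hN_diag i
    · simpa [N, h] using hij h
  have hN_nonneg i j : 0 ≤ N i j := by
    rcases eq_or_ne i j with rfl | h
    · exact (hN_diag i).le
    · simpa [N, h] using hA i j h
  refine ⟨_, (isIrreducible_iff_exists_pow_pos hN_nonneg).2 fun i j => ?_⟩
  rcases eq_or_ne i j with rfl | hij
  · exact ⟨1, one_pos, by simpa using hN_diag i⟩
  obtain ⟨k, γ, rfl, rfl, hγ⟩ := hchain i j hij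
  refine ⟨k, Nat.pos_of_ne_zero ?_, pow_apply_pos_of_chain hN_nonneg γ fun l => hN_pos _ _ (hγ l)⟩
  rintro rfl
  exact hij rfl

theorem exp_add_smul_one (X : Matrix ι ι ℝ) (r : ℝ) : exp (X + r • 1) = Real.exp r • exp X := by
  have h : exp (algebraMap ℝ (Matrix ι ι ℝ) r) = algebraMap ℝ _ (exp r) := by
    open scoped Norms.Operator in
    exact (map_exp (algebraMap ℝ (Matrix ι ι ℝ)) (continuous_algebraMap _ _) r).symm
  rw [exp_add_of_commute _ _ ((Commute.one_right X).smul_right r),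
    ← Algebra.algebraMap_eq_smul_one, h, Algebra.algebraMap_eq_smul_one, mul_smul_comm, mul_one,
    Real.exp_eq_exp_ℝ]

theorem exp_smul_add_smul (X : Matrix ι ι ℝ) (s t : ℝ) :
    exp ((s + t) • X) = exp (s • X) * exp (t • X) := by
  rw [add_smul]
  exact exp_add_of_commute _ _ (((Commute.refl X).smul_left s).smul_right t)

theorem continuous_exp_smul (X : Matrix ι ι ℝ) : Continuous fun t : ℝ => exp (t • X) := by
  open scoped Norms.Operator in fun_prop

theorem hasDerivAt_exp_smul_mulVec (A : Matrix ι ι ℝ) (w : ι → ℝ) (t : ℝ) :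
    HasDerivAt (fun s : ℝ => exp (s • A) *ᵥ w) (exp (t • A) *ᵥ (A *ᵥ w)) t := by
  open scoped Norms.Operator in
  have h := (LinearMap.toContinuousLinearMap ((mulVecBilin ℝ ℝ).flip w)).hasFDerivAt.comp_hasDerivAt
    t (hasDerivAt_exp_smul_const (𝕂 := ℝ) A t)
  rw [mulVec_mulVec]
  exact h

theorem exp_map_ofReal (X : Matrix ι ι ℝ) :
    exp (X.map Complex.ofReal) = (exp X).map Complex.ofReal := by
  open scoped Norms.Operator in
  exact (map_exp (Complex.ofRealHom.mapMatrix (m := ι))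
    (continuous_id.matrix_map Complex.continuous_ofReal) X).symm

theorem exp_smul_eq_smul_exp_smul_add (A : Matrix ι ι ℝ) (c t : ℝ) :
    exp (t • A) = Real.exp (-(c * t)) • exp (t • (A + c • 1)) := by
  rw [smul_add, smul_smul, exp_add_smul_one, smul_smul, ← Real.exp_add, mul_comm t c,
    neg_add_cancel, Real.exp_zero, one_smul]

section Shifted

variable {A : Matrix ι ι ℝ} {c : ℝ}

theorem exp_smul_apply_nonneg (hA : ∀ i j, 0 ≤ (A + c • 1) i j) {t : ℝ} (ht : 0 ≤ t)
    (i j : ι) : 0 ≤ exp (t • A) i j := by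
  rw [exp_smul_eq_smul_exp_smul_add A c t, Matrix.smul_apply, smul_eq_mul]
  exact mul_nonneg (Real.exp_pos _).le
    (exp_apply_nonneg (fun i j => by simpa using mul_nonneg ht (hA i j)) i j)

theorem exp_neg_mul_le_exp_smul_apply_self (hA : ∀ i j, 0 ≤ (A + c • 1) i j) {t : ℝ}
    (ht : 0 ≤ t) (i : ι) : Real.exp (-(c * t)) ≤ exp (t • A) i i := by
  have h := pow_apply_div_factorial_le_exp_apply
    (X := t • (A + c • 1)) (fun i j => by simpa using mul_nonneg ht (hA i j)) 0 i i
  rw [exp_smul_eq_smul_exp_smul_add A c t, Matrix.smul_apply, smul_eq_mul]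
  simp only [pow_zero, one_apply_eq, Nat.factorial_zero, Nat.cast_one, div_one] at h
  exact le_mul_of_one_le_right (Real.exp_pos _).le h

theorem exp_apply_pos_of_isIrreducible (hA : (A + c • 1).IsIrreducible) (i j : ι) :
    0 < exp A i j := by
  have h := exp_smul_eq_smul_exp_smul_add A c 1
  rw [one_smul, one_smul] at h
  rw [h, Matrix.smul_apply, smul_eq_mul]
  exact mul_pos (Real.exp_pos _) (hA.exp_apply_pos i j)

theorem exists_exp_bounds_exp_smul_mulVec_one [Nonempty ι] (hA : (A + c • 1).IsIrreducible) :
    ∃ l κ₁ κ₂ : ℝ, 0 < κ₁ ∧ 0 < κ₂ ∧ ∀ t : ℝ, 0 ≤ t → ∀ i,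
      κ₁ * Real.exp (l * t) ≤ (exp (t • A) *ᵥ 1) i ∧
      (exp (t • A) *ᵥ 1) i ≤ κ₂ * Real.exp (l * t) := by
  have hS t (ht : 0 ≤ t) := exp_smul_apply_nonneg hA.nonneg ht
  let f (t : ℝ) := maxRowSum (exp (t • A))
  let g (t : ℝ) := minRowSum (exp (t • A))
  have hg_pos t (ht : 0 ≤ t) : 0 < g t :=
    (Real.exp_pos (-(c * t))).trans_le <| le_inf' _ _ fun i _ =>
      (exp_neg_mul_le_exp_smul_apply_self hA.nonneg ht i).trans
        (apply_self_le_mulVec_one (hS t ht) i)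
  have hf_mul s t (hs : 0 ≤ s) (ht : 0 ≤ t) : f (s + t) ≤ f s * f t := by
    simpa only [f, exp_smul_add_smul] using maxRowSum_mul_le (hS s hs) (hS t ht)
  have hg_mul s t (hs : 0 ≤ s) (ht : 0 ≤ t) : g s * g t ≤ g (s + t) := by
    simpa only [g, exp_smul_add_smul] using minRowSum_mul_le (hS s hs) (hS t ht)
  obtain ⟨⟨i₀, j₀⟩, hδ⟩ := Finite.exists_min fun p : ι × ι => exp A p.1 p.2
  have hharnack t (ht : 0 ≤ t) : exp A i₀ j₀ * f t ≤ g (1 + t) := by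
    simpa only [g, exp_smul_add_smul, one_smul] using mul_maxRowSum_le_minRowSum_mul
      (exp_apply_pos_of_isIrreducible hA i₀ j₀).le (fun i j => hδ (i, j)) (hS t ht)
  obtain ⟨F, hF⟩ := isCompact_Icc.bddAbove_image
    (continuous_maxRowSum.comp (continuous_exp_smul A)).continuousOn
  obtain ⟨t₀, ht₀, hG⟩ := isCompact_Icc.exists_isMinOn (nonempty_Icc.2 zero_le_one)
    (continuous_minRowSum.comp (continuous_exp_smul A)).continuousOn
  have hF' t (ht : t ∈ Icc (0 : ℝ) 1) : f t ≤ F := hF (mem_image_of_mem _ ht)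
  obtain ⟨K, hK⟩ := exists_le_mul_of_harnack (exp_apply_pos_of_isIrreducible hA i₀ j₀)
    (hg_pos t₀ ht₀.1) hg_pos (fun t _ => minRowSum_le_maxRowSum _) hf_mul hharnack hF' hG
  obtain ⟨l, κ₁, κ₂, hκ₁, hκ₂, h⟩ := exists_exp_bounds_of_submultiplicative hg_pos
    (fun t _ => minRowSum_le_maxRowSum _) hK hf_mul hg_mul hF' (hg_pos t₀ ht₀.1) hG
  exact ⟨l, κ₁, κ₂, hκ₁, hκ₂, fun t ht i => ⟨(h t ht).1.trans (minRowSum_le_mulVec_one _ i),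
    (mulVec_one_le_maxRowSum _ i).trans (h t ht).2⟩⟩

end Shifted

theorem norm_le_maxRowSum_of_mem_spectrum [Nonempty ι] {S : Matrix ι ι ℝ}
    (hS : ∀ i j, 0 ≤ S i j) {μ : ℂ} (hμ : μ ∈ spectrum ℂ (S.map Complex.ofReal)) :
    ‖μ‖ ≤ maxRowSum S := by
  open scoped Norms.Operator in
  refine (spectrum.norm_le_norm_of_mem hμ).trans ?_
  have h₀ : 0 ≤ maxRowSum S :=
    (mulVec_one_nonneg hS (Classical.arbitrary ι)).trans (mulVec_one_le_maxRowSum _ _)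
  rw [linfty_opNorm_def, ← NNReal.coe_mk (maxRowSum S) h₀, NNReal.coe_le_coe, Finset.sup_le_iff]
  intro i _
  rw [← NNReal.coe_le_coe, NNReal.coe_sum]
  simpa [abs_of_nonneg (hS i _), mulVec_one_apply] using mulVec_one_le_maxRowSum S i

theorem re_le_of_exp_smul_mulVec_one_le [Nonempty ι] {A : Matrix ι ι ℝ} {l κ : ℝ}
    (hS : ∀ t : ℝ, 0 ≤ t → ∀ i j, 0 ≤ exp (t • A) i j)
    (hup : ∀ t : ℝ, 0 ≤ t → ∀ i, (exp (t • A) *ᵥ 1) i ≤ κ * Real.exp (l * t))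
    {z : ℂ} (hz : z ∈ spectrum ℂ (A.map Complex.ofReal)) : z.re ≤ l := by
  refine le_of_forall_exp_mul_le (κ := κ) fun t ht => ?_
  have htz : (t : ℂ) * z ∈ spectrum ℂ ((t • A).map Complex.ofReal) := by
    have h := (spectrum.smul_mem_smul_iff (r := Units.mk0 (t : ℂ) (by exact_mod_cast ht.ne'))).2 hz
    convert h using 2
    · ext i j
      simp [Units.smul_def]
    · simp [Units.smul_def]
  have hexp : Complex.exp (t * z) ∈ spectrum ℂ ((exp (t • A)).map Complex.ofReal) := by
    rw [← exp_map_ofReal, Complex.exp_eq_exp_ℂ]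
    open scoped Norms.Operator in exact spectrum.exp_mem_exp _ htz
  calc Real.exp (z.re * t) = ‖Complex.exp (t * z)‖ := by simp [Complex.norm_exp, mul_comm]
    _ ≤ maxRowSum (exp (t • A)) := norm_le_maxRowSum_of_mem_spectrum (hS t ht.le) hexp
    _ ≤ κ * Real.exp (l * t) := sup'_le _ _ fun i _ => hup t ht.le i

theorem mem_spectrum_of_exp_smul_mulVec_one_bounds [Nonempty ι] {A : Matrix ι ι ℝ}
    {l κ₁ κ₂ : ℝ} (hκ₁ : 0 < κ₁) (hS : ∀ t : ℝ, 0 ≤ t → ∀ i j, 0 ≤ exp (t • A) i j)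
    (hbounds : ∀ t : ℝ, 0 ≤ t → ∀ i, κ₁ * Real.exp (l * t) ≤ (exp (t • A) *ᵥ 1) i ∧
      (exp (t • A) *ᵥ 1) i ≤ κ₂ * Real.exp (l * t)) :
    l ∈ spectrum ℝ A := by
  by_contra hl
  obtain ⟨w, hw⟩ := mulVec_surjective_iff_isUnit.2 (spectrum.notMem_iff.1 hl) 1
  have hAw : A *ᵥ w = l • w - 1 := by
    rw [sub_mulVec, Algebra.algebraMap_eq_smul_one, smul_mulVec, one_mulVec] at hw
    rw [← hw, sub_sub_cancel]
  let i := Classical.arbitrary ι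
  let ψ s := Real.exp (-(l * s)) * (exp (s • A) *ᵥ w) i
  have hψ s : HasDerivAt ψ (-(Real.exp (-(l * s)) * (exp (s • A) *ᵥ 1) i)) s := by
    have h₁ : HasDerivAt (fun s => Real.exp (-(l * s))) (Real.exp (-(l * s)) * -l) s := by
      simpa using ((hasDerivAt_id s).const_mul l).neg.exp
    refine (h₁.mul (hasDerivAt_pi.1 (hasDerivAt_exp_smul_mulVec A w s) i)).congr_deriv ?_
    rw [hAw, mulVec_sub, mulVec_smul]
    simp only [Pi.sub_apply, Pi.smul_apply, smul_eq_mul]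
    ring
  have hψ_deriv s (hs : 0 < s) : deriv ψ s ≤ -κ₁ := by
    rw [(hψ s).deriv, neg_le_neg_iff, Real.exp_neg, ← div_eq_inv_mul,
      le_div_iff₀ (Real.exp_pos _)]
    exact (hbounds s hs.le i).1
  have hψ_ge s (hs : 0 ≤ s) : -(κ₂ * ‖w‖) ≤ ψ s := by
    have h := (neg_le_neg (mul_le_mul_of_nonneg_right (hbounds s hs i).2 (norm_nonneg w))).trans
      (neg_mulVec_one_mul_norm_le_mulVec (hS s hs) w i)
    calc -(κ₂ * ‖w‖) = Real.exp (-(l * s)) * -(κ₂ * Real.exp (l * s) * ‖w‖) := by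
          rw [Real.exp_neg]; field_simp
      _ ≤ ψ s := mul_le_mul_of_nonneg_left h (Real.exp_pos _).le
  obtain ⟨n, hn⟩ := exists_nat_gt ((ψ 0 + κ₂ * ‖w‖) / κ₁)
  have hdecay := (convex_Ici 0).image_sub_le_mul_sub_of_deriv_le
    (fun s _ => (hψ s).continuousAt.continuousWithinAt)
    (fun s _ => (hψ s).differentiableAt.differentiableWithinAt)
    (fun s hs => hψ_deriv s (by simpa using hs)) 0 le_rfl n (mem_Ici.2 n.cast_nonneg)
    n.cast_nonneg
  rw [div_lt_iff₀ hκ₁] at hn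
  linarith [hψ_ge n n.cast_nonneg]

theorem ofReal_mem_spectrum_map_ofReal_iff (A : Matrix ι ι ℝ) (r : ℝ) :
    (r : ℂ) ∈ spectrum ℂ (A.map Complex.ofReal) ↔ r ∈ spectrum ℝ A := by
  rw [mem_spectrum_iff_isRoot_charpoly, mem_spectrum_iff_isRoot_charpoly,
    ← Polynomial.isRoot_map_iff (f := Complex.ofRealHom) Complex.ofReal_injective, ← charpoly_map]
  rfl

end Matrix

theorem feynman_kac_exponential_rate_general
    (M : ℕ) (hM : 0 < M) (Qb : Matrix (Fin M) (Fin M) ℝ)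
    (hoff : ∀ i j, i ≠ j → 0 ≤ Qb i j)
    (hirr : ∀ i j : Fin M, i ≠ j → ∃ (k : ℕ) (c : Fin (k + 1) → Fin M),
      c 0 = i ∧ c (Fin.last k) = j ∧ ∀ l : Fin k, 0 < Qb (c l.castSucc) (c l.succ))
    (C : Fin M → ℝ) (p : ℝ)
    (η : ℝ)
    (hη : IsGreatest {x : ℝ | ∃ z ∈
        spectrum ℂ ((Qb + p • Matrix.diagonal C).map Complex.ofReal), x = z.re} (-η)) :
    ∃ κ₁ κ₂ : ℝ, 0 < κ₁ ∧ 0 < κ₂ ∧ ∀ i₀ : Fin M, ∀ t : ℝ, 0 < t →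
      κ₁ * Real.exp (-η * t) ≤
        (NormedSpace.exp (t • (Qb + p • Matrix.diagonal C)) *ᵥ (fun _ => (1 : ℝ))) i₀ ∧
      (NormedSpace.exp (t • (Qb + p • Matrix.diagonal C)) *ᵥ (fun _ => (1 : ℝ))) i₀ ≤
        κ₂ * Real.exp (-η * t) := by
  have : Nonempty (Fin M) := ⟨⟨0, hM⟩⟩
  set A := Qb + p • diagonal C
  have hA_off i j (h : i ≠ j) : A i j = Qb i j := by simp [A, h]
  obtain ⟨c, hc⟩ := exists_isIrreducible_add_smul_one (A := A)
    (fun i j h => hA_off i j h ▸ hoff i j h) fun i j hij => by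
      obtain ⟨k, γ, h₀, hk, hγ⟩ := hirr i j hij
      exact ⟨k, γ, h₀, hk, fun l h => hA_off _ _ h ▸ hγ l⟩
  have hS t (ht : 0 ≤ t) := exp_smul_apply_nonneg hc.nonneg ht
  obtain ⟨l, κ₁, κ₂, hκ₁, hκ₂, hb⟩ := exists_exp_bounds_exp_smul_mulVec_one hc
  have hl : IsGreatest {x : ℝ | ∃ z ∈ spectrum ℂ (A.map Complex.ofReal), x = z.re} l := by
    refine ⟨⟨l, ?_, by simp⟩, ?_⟩
    · exact (ofReal_mem_spectrum_map_ofReal_iff A l).2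
        (mem_spectrum_of_exp_smul_mulVec_one_bounds hκ₁ hS hb)
    · rintro _ ⟨z, hz, rfl⟩
      exact re_le_of_exp_smul_mulVec_one_le hS (fun t ht i => (hb t ht i).2) hz
  rw [hη.unique hl]
  exact ⟨κ₁, κ₂, hκ₁, hκ₂, fun i t ht => hb t ht.le i⟩

/-- Exact exponential rate of the Feynman–Kac semigroup: for an irreducible
conservative `Q`-matrix `Q̄` on `Fin M`, `C : Fin M → ℝ`, `p > 0`,
`Q̄_p = Q̄ + p • diagonal C`, and
`η_{p,C} = -max { Re γ : γ ∈ Spec Q̄_p }`, there are constants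
`κ₁(p), κ₂(p) > 0` such that for every `i₀` and all `t > 0`,
`κ₁ e^{-η t} ≤ (e^{t Q̄_p} 𝟙)_{i₀} ≤ κ₂ e^{-η t}`. -/
theorem feynman_kac_exponential_rate
    (M : ℕ) (hM : 0 < M) (Qb : Matrix (Fin M) (Fin M) ℝ)
    (hoff : ∀ i j, i ≠ j → 0 ≤ Qb i j)
    (hcons : ∀ i, ∑ j, Qb i j = 0)
    (hirr : ∀ i j : Fin M, i ≠ j → ∃ (k : ℕ) (c : Fin (k + 1) → Fin M),
      c 0 = i ∧ c (Fin.last k) = j ∧ ∀ l : Fin k, 0 < Qb (c l.castSucc) (c l.succ))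
    (C : Fin M → ℝ) (p : ℝ) (hp : 0 < p)
    (η : ℝ)
    (hη : IsGreatest {x : ℝ | ∃ z ∈
        spectrum ℂ ((Qb + p • Matrix.diagonal C).map Complex.ofReal), x = z.re} (-η)) :
    ∃ κ₁ κ₂ : ℝ, 0 < κ₁ ∧ 0 < κ₂ ∧ ∀ i₀ : Fin M, ∀ t : ℝ, 0 < t →
      κ₁ * Real.exp (-η * t) ≤
        (NormedSpace.exp (t • (Qb + p • Matrix.diagonal C)) *ᵥ (fun _ => (1 : ℝ))) i₀ ∧
      (NormedSpace.exp (t • (Qb + p • Matrix.diagonal C)) *ᵥ (fun _ => (1 : ℝ))) i₀ ≤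
        κ₂ * Real.exp (-η * t) :=
  feynman_kac_exponential_rate_general M hM Qb hoff hirr C p η hη
end
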